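/- Suppose ε ≤ ρ/2 and the current profile (x,y) is not a δ-Nash equilibrium, and let (x',y') be a direction minimizing the ρ-directional derivative of V at (x,y). Then the profile (x⁺,y⁺) = ((1−ε)x + εx', (1−ε)y + εy') satisfies V(x⁺,y⁺) ≤ V(x,y) − ε·δ. -/

import Mathlib

open Matrix Finset

variable {n : ℕ}

/-- Duality gap: V(x,y) = max_i e_i^T R y - min_j x^T R e_j. -/
noncomputable def V [NeZero n] (R : Matrix (Fin n) (Fin n) ℝ) (x y : Fin n → ℝ) : ℝ :=
  (Finset.univ.sup' Finset.univ_nonempty fun i => (R *ᵥ y) i) -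
  (Finset.univ.inf' Finset.univ_nonempty fun j => (x ᵥ* R) j)

/-- δ-approximate Nash equilibrium of the zero-sum game (R, -R). -/
def isApproxNE (R : Matrix (Fin n) (Fin n) ℝ) (δ : ℝ) (x y : Fin n → ℝ) : Prop :=
  (∀ i, (R *ᵥ y) i ≤ x ⬝ᵥ (R *ᵥ y) + δ) ∧ (∀ j, x ⬝ᵥ (R *ᵥ y) - δ ≤ (x ᵥ* R) j)

/-- ρ-best responses of the row player against y. -/
def BRr (R : Matrix (Fin n) (Fin n) ℝ) (ρ : ℝ) (y : Fin n → ℝ) : Set (Fin n) :=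
  {i | ∀ k, (R *ᵥ y) k ≤ (R *ᵥ y) i + ρ}

/-- ρ-best responses of the column player against x. -/
def BRc (R : Matrix (Fin n) (Fin n) ℝ) (ρ : ℝ) (x : Fin n → ℝ) : Set (Fin n) :=
  {j | ∀ k, (x ᵥ* R) j ≤ (x ᵥ* R) k + ρ}

/-- ρ-directional derivative of the duality gap at (x,y) toward (x',y');
for ρ = 0 this is the exact directional derivative. -/
noncomputable def dirDeriv [NeZero n] (R : Matrix (Fin n) (Fin n) ℝ) (ρ : ℝ)
    (x y x' y' : Fin n → ℝ) : ℝ :=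
  sSup ((fun i => (R *ᵥ y') i) '' BRr R ρ y) -
  sInf ((fun j => (x' ᵥ* R) j) '' BRc R ρ x) - V R x y

/-!
Mixing a weight `ε ≤ ρ/2` of `(x', y')` into `(x, y)` cannot promote a row outside the
ρ-best responses to `y` (nor a column outside those to `x`) to a maximizer (minimizer): its
payoff is at least `(1 - ε) ρ ≥ ε` short, while entries of `R` lie in `[0, 1]`. Hence
`V(x⁺, y⁺) ≤ V(x, y) + ε ∇_{ρ,(x',y')} V(x, y)`. An equilibrium `(u, v)` of the game, given by
von Neumann's minimax theorem, has `∇_{ρ,(u,v)} V(x, y) ≤ -V(x, y)`, and `V(x, y) > δ` as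
`(x, y)` is not a δ-equilibrium; so the minimizing direction has derivative `< -δ`.
-/

section Minimax

variable {ι κ : Type*} [Fintype ι]

lemma nonneg_of_forall_dotProduct_lt {g : ι → ℝ} {w s : ℝ}
    (h : ∀ z : ι → ℝ, (∀ i, z i < w) → g ⬝ᵥ z < s) (i : ι) : 0 ≤ g i := by
  classical
  by_contra! hgi
  obtain ⟨z₀, hz₀⟩ : ∃ z₀ : ι → ℝ, ∀ k, z₀ k < w := ⟨fun _ => w - 1, fun _ => by linarith⟩
  set t := (g ⬝ᵥ z₀ - s) / g i
  have ht : 0 < t := div_pos_of_neg_of_neg (by linarith [h z₀ hz₀]) hgi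
  have hz : ∀ k, (z₀ - t • (Pi.single i 1 : ι → ℝ)) k < w := fun k => by
    have : 0 ≤ t * (Pi.single i 1 : ι → ℝ) k := by
      rw [Pi.single_apply]; split_ifs <;> linarith
    simp only [Pi.sub_apply, Pi.smul_apply, smul_eq_mul]
    linarith [hz₀ k]
  have hs : g ⬝ᵥ (z₀ - t • (Pi.single i 1 : ι → ℝ)) = s := by
    rw [dotProduct_sub, dotProduct_smul, dotProduct_single, smul_eq_mul, mul_one,
      div_mul_cancel₀ _ hgi.ne]
    ring
  exact (h _ hz).ne hs

open Filter Topology in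
lemma mul_sum_le_of_forall_dotProduct_lt {g : ι → ℝ} {w s : ℝ}
    (h : ∀ z : ι → ℝ, (∀ i, z i < w) → g ⬝ᵥ z < s) : w * ∑ i, g i ≤ s := by
  have hlim : Tendsto (fun c : ℝ => c * ∑ i, g i) (𝓝[<] w) (𝓝 (w * ∑ i, g i)) :=
    ((continuous_id.mul continuous_const).tendsto w).mono_left nhdsWithin_le_nhds
  refine le_of_tendsto hlim (eventually_nhdsWithin_of_forall fun c (hc : c < w) => ?_)
  simpa [dotProduct_smul, dotProduct_one] using (h (c • 1) fun i => by simpa using hc).le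

/-- Von Neumann's minimax theorem. With `w` the minimum over `v` of `max_i (A v)_i`, separate
the open orthant `{z | z < w}` from `A '' Δ`; the normalized normal of the hyperplane is `u`. -/
theorem exists_mulVec_le_vecMul [Fintype κ] [Nonempty ι] [Nonempty κ] (A : Matrix ι κ ℝ) :
    ∃ u ∈ stdSimplex ℝ ι, ∃ v ∈ stdSimplex ℝ κ, ∀ i j, (A *ᵥ v) i ≤ (u ᵥ* A) j := by
  classical
  have hcont : Continuous fun v : κ → ℝ => univ.sup' univ_nonempty (A *ᵥ v) :=
    Continuous.finset_sup'_apply _ fun i _ =>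
      (continuous_apply i).comp (continuous_const.matrix_mulVec continuous_id)
  obtain ⟨v, hv, hmin⟩ := (isCompact_stdSimplex ℝ κ).exists_isMinOn
    ⟨_, single_mem_stdSimplex ℝ (Classical.arbitrary κ)⟩ hcont.continuousOn
  set w := univ.sup' univ_nonempty (A *ᵥ v)
  have hdisj : Disjoint (Set.univ.pi fun _ => Set.Iio w) (A.mulVecLin '' stdSimplex ℝ κ) := by
    refine Set.disjoint_left.2 fun z hz ⟨v', hv', hz'⟩ => (isMinOn_iff.1 hmin v' hv').not_gt ?_
    subst hz'
    exact (sup'_lt_iff _).2 fun i _ => Set.mem_univ_pi.1 hz i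
  obtain ⟨f, s, hfO, hfC⟩ := geometric_hahn_banach_open (convex_pi fun _ _ => convex_Iio w)
    (isOpen_set_pi Set.finite_univ fun _ _ => isOpen_Iio)
    ((convex_stdSimplex ℝ κ).linear_image A.mulVecLin) hdisj
  obtain ⟨g, hg⟩ := (dotProductEquiv ℝ ι).surjective f.toLinearMap
  have hfg : ∀ z, f z = g ⬝ᵥ z := fun z => by
    simpa using (LinearMap.congr_fun hg z).symm
  have hO : ∀ z : ι → ℝ, (∀ i, z i < w) → g ⬝ᵥ z < s := fun z hz =>
    hfg z ▸ hfO z (Set.mem_univ_pi.2 hz)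
  have hC : ∀ v' ∈ stdSimplex ℝ κ, s ≤ (g ᵥ* A) ⬝ᵥ v' := fun v' hv' => by
    simpa [hfg, dotProduct_mulVec] using hfC _ ⟨v', hv', rfl⟩
  have hg0 := nonneg_of_forall_dotProduct_lt hO
  have hG : 0 < ∑ i, g i := by
    refine (Finset.sum_nonneg fun i _ => hg0 i).lt_of_ne' fun hG => ?_
    obtain rfl : g = 0 := funext fun i =>
      (Finset.sum_eq_zero_iff_of_nonneg fun i _ => hg0 i).1 hG i (mem_univ i)
    have hpos := hO (fun _ => w - 1) fun _ => by linarith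
    have hnonpos := hC v hv
    simp only [zero_dotProduct, zero_vecMul] at hpos hnonpos
    linarith
  refine ⟨(∑ i, g i)⁻¹ • g, ⟨fun i => ?_, ?_⟩, v, hv, fun i j => ?_⟩
  · exact mul_nonneg (inv_nonneg.2 hG.le) (hg0 i)
  · simp [← Finset.mul_sum, hG.ne']
  · calc (A *ᵥ v) i ≤ w := le_sup' (A *ᵥ v) (mem_univ i)
      _ ≤ (((∑ i, g i)⁻¹ • g) ᵥ* A) j := by
        rw [smul_vecMul, Pi.smul_apply, smul_eq_mul, le_inv_mul_iff₀' hG]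
        simpa using (mul_sum_le_of_forall_dotProduct_lt hO).trans
          (hC _ (single_mem_stdSimplex ℝ j))

end Minimax

section StdSimplex

variable {ι : Type*} [Fintype ι] {x : ι → ℝ}

lemma dotProduct_le_sup' [Nonempty ι] (hx : x ∈ stdSimplex ℝ ι) (a : ι → ℝ) :
    x ⬝ᵥ a ≤ univ.sup' univ_nonempty a :=
  (convex_Iic _).sum_mem (z := a) (fun i _ => hx.1 i) hx.2 fun i _ => le_sup' a (mem_univ i)

lemma inf'_le_dotProduct [Nonempty ι] (hx : x ∈ stdSimplex ℝ ι) (a : ι → ℝ) :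
    univ.inf' univ_nonempty a ≤ a ⬝ᵥ x := by
  rw [dotProduct_comm]
  exact (convex_Ici _).sum_mem (z := a) (fun i _ => hx.1 i) hx.2 fun i _ => inf'_le a (mem_univ i)

lemma mulVec_mem_Icc {κ : Type*} (A : Matrix κ ι ℝ) (hA : ∀ i j, A i j ∈ Set.Icc (0:ℝ) 1)
    (hx : x ∈ stdSimplex ℝ ι) (i : κ) : (A *ᵥ x) i ∈ Set.Icc (0:ℝ) 1 := by
  rw [mulVec, dotProduct_comm]
  exact (convex_Icc 0 1).sum_mem (fun j _ => hx.1 j) hx.2 fun j _ => hA i j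

lemma vecMul_mem_Icc {κ : Type*} (A : Matrix ι κ ℝ) (hA : ∀ i j, A i j ∈ Set.Icc (0:ℝ) 1)
    (hx : x ∈ stdSimplex ℝ ι) (j : κ) : (x ᵥ* A) j ∈ Set.Icc (0:ℝ) 1 :=
  (convex_Icc 0 1).sum_mem (fun i _ => hx.1 i) hx.2 fun i _ => hA i j

end StdSimplex

section DualityGap

variable [NeZero n] (R : Matrix (Fin n) (Fin n) ℝ) {ρ ε : ℝ} {x y x' y' : Fin n → ℝ}

lemma BRr_nonempty (hρ : 0 ≤ ρ) (y : Fin n → ℝ) : (BRr R ρ y).Nonempty := by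
  obtain ⟨i, -, hi⟩ := exists_mem_eq_sup' univ_nonempty (R *ᵥ y)
  exact ⟨i, fun k => hi ▸ (le_sup' (R *ᵥ y) (mem_univ k)).trans (le_add_of_nonneg_right hρ)⟩

lemma BRc_nonempty (hρ : 0 ≤ ρ) (x : Fin n → ℝ) : (BRc R ρ x).Nonempty := by
  obtain ⟨j, -, hj⟩ := exists_mem_eq_inf' univ_nonempty (x ᵥ* R)
  exact ⟨j, fun k => hj ▸ (le_add_of_nonneg_right hρ).trans' (inf'_le (x ᵥ* R) (mem_univ k))⟩

lemma lt_V_of_not_isApproxNE {δ : ℝ} (hx : x ∈ stdSimplex ℝ (Fin n))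
    (hy : y ∈ stdSimplex ℝ (Fin n)) (h : ¬ isApproxNE R δ x y) : δ < V R x y := by
  have hmax := dotProduct_le_sup' hx (R *ᵥ y)
  have hmin : univ.inf' univ_nonempty (x ᵥ* R) ≤ x ⬝ᵥ (R *ᵥ y) :=
    dotProduct_mulVec x R y ▸ inf'_le_dotProduct hy (x ᵥ* R)
  simp only [isApproxNE, not_and_or, not_forall, not_le] at h
  rw [V]
  rcases h with ⟨i, hi⟩ | ⟨j, hj⟩
  · linarith [le_sup' (R *ᵥ y) (mem_univ i)]
  · linarith [inf'_le (x ᵥ* R) (mem_univ j)]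

lemma exists_dirDeriv_le_neg_V (hρ : 0 ≤ ρ) (x y : Fin n → ℝ) :
    ∃ u ∈ stdSimplex ℝ (Fin n), ∃ v ∈ stdSimplex ℝ (Fin n), dirDeriv R ρ x y u v ≤ -V R x y := by
  obtain ⟨u, hu, v, hv, huv⟩ := exists_mulVec_le_vecMul R
  refine ⟨u, hu, v, hv, ?_⟩
  have : sSup ((fun i => (R *ᵥ v) i) '' BRr R ρ y) ≤ sInf ((fun j => (u ᵥ* R) j) '' BRc R ρ x) :=
    le_csInf ((BRc_nonempty R hρ x).image _) fun _ ⟨j, _, hj⟩ =>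
      csSup_le ((BRr_nonempty R hρ y).image _) fun _ ⟨i, _, hi⟩ => hi ▸ hj ▸ huv i j
  rw [dirDeriv]
  linarith

lemma sup'_mulVec_smul_add_smul_le (hRy' : ∀ i, (R *ᵥ y') i ∈ Set.Icc (0:ℝ) 1)
    (hε : 0 ≤ ε) (hερ : ε ≤ ρ / 2) (hρ : ρ ≤ 1) :
    univ.sup' univ_nonempty (R *ᵥ ((1 - ε) • y + ε • y')) ≤
      (1 - ε) * univ.sup' univ_nonempty (R *ᵥ y) +
        ε * sSup ((fun i => (R *ᵥ y') i) '' BRr R ρ y) := by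
  set S := sSup ((fun i => (R *ᵥ y') i) '' BRr R ρ y)
  have hbdd : BddAbove ((fun i => (R *ᵥ y') i) '' BRr R ρ y) := (Set.toFinite _).bddAbove
  obtain ⟨i₀, hi₀⟩ := BRr_nonempty R (by linarith) y
  have hS : 0 ≤ S := (hRy' i₀).1.trans (le_csSup hbdd ⟨i₀, hi₀, rfl⟩)
  refine sup'_le _ _ fun i _ => ?_
  simp only [mulVec_add, mulVec_smul, Pi.add_apply, Pi.smul_apply, smul_eq_mul]
  have hM := le_sup' (R *ᵥ y) (mem_univ i)
  by_cases hi : i ∈ BRr R ρ y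
  · nlinarith [le_csSup hbdd ⟨i, hi, rfl⟩]
  · obtain ⟨k, hk⟩ : ∃ k, (R *ᵥ y) i + ρ < (R *ᵥ y) k := by simpa [BRr] using hi
    nlinarith [le_sup' (R *ᵥ y) (mem_univ k), (hRy' i).2]

lemma le_inf'_smul_add_smul_vecMul (hx'R : ∀ j, (x' ᵥ* R) j ∈ Set.Icc (0:ℝ) 1)
    (hε : 0 ≤ ε) (hερ : ε ≤ ρ / 2) (hρ : ρ ≤ 1) :
    (1 - ε) * univ.inf' univ_nonempty (x ᵥ* R) +
        ε * sInf ((fun j => (x' ᵥ* R) j) '' BRc R ρ x) ≤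
      univ.inf' univ_nonempty (((1 - ε) • x + ε • x') ᵥ* R) := by
  set I := sInf ((fun j => (x' ᵥ* R) j) '' BRc R ρ x)
  have hbdd : BddBelow ((fun j => (x' ᵥ* R) j) '' BRc R ρ x) := (Set.toFinite _).bddBelow
  obtain ⟨j₀, hj₀⟩ := BRc_nonempty R (by linarith) x
  have hI : I ≤ 1 := (csInf_le hbdd ⟨j₀, hj₀, rfl⟩).trans (hx'R j₀).2
  refine le_inf' _ _ fun j _ => ?_
  simp only [add_vecMul, smul_vecMul, Pi.add_apply, Pi.smul_apply, smul_eq_mul]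
  have hm := inf'_le (x ᵥ* R) (mem_univ j)
  by_cases hj : j ∈ BRc R ρ x
  · nlinarith [csInf_le hbdd ⟨j, hj, rfl⟩]
  · obtain ⟨k, hk⟩ : ∃ k, (x ᵥ* R) k + ρ < (x ᵥ* R) j := by simpa [BRc] using hj
    nlinarith [inf'_le (x ᵥ* R) (mem_univ k), (hx'R j).1]

lemma V_smul_add_smul_le (hR : ∀ i j, R i j ∈ Set.Icc (0:ℝ) 1)
    (hx' : x' ∈ stdSimplex ℝ (Fin n)) (hy' : y' ∈ stdSimplex ℝ (Fin n))
    (hε : 0 ≤ ε) (hερ : ε ≤ ρ / 2) (hρ : ρ ≤ 1) :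
    V R ((1 - ε) • x + ε • x') ((1 - ε) • y + ε • y') ≤
      V R x y + ε * dirDeriv R ρ x y x' y' := by
  have hsup := sup'_mulVec_smul_add_smul_le R (mulVec_mem_Icc R hR hy') hε hερ hρ (y := y)
  have hinf := le_inf'_smul_add_smul_vecMul R (vecMul_mem_Icc R hR hx') hε hερ hρ (x := x)
  simp only [V, dirDeriv]
  linarith

end DualityGap

theorem dualityGap_decrease_general [NeZero n] (R : Matrix (Fin n) (Fin n) ℝ)
    (hR : ∀ i j, R i j ∈ Set.Icc (0:ℝ) 1)
    (δ : ℝ)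
    (ρ : ℝ) (hρ : ρ ∈ Set.Ioc (0:ℝ) 1)
    (ε : ℝ) (hε : 0 < ε) (hερ : ε ≤ ρ / 2)
    (x y x' y' : Fin n → ℝ)
    (hx : x ∈ stdSimplex ℝ (Fin n)) (hy : y ∈ stdSimplex ℝ (Fin n))
    (hx' : x' ∈ stdSimplex ℝ (Fin n)) (hy' : y' ∈ stdSimplex ℝ (Fin n))
    (hnot : ¬ isApproxNE R δ x y)
    (hmin : ∀ u v, u ∈ stdSimplex ℝ (Fin n) → v ∈ stdSimplex ℝ (Fin n) →
      dirDeriv R ρ x y x' y' ≤ dirDeriv R ρ x y u v) :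
    V R ((1 - ε) • x + ε • x') ((1 - ε) • y + ε • y') ≤ V R x y - ε * δ := by
  obtain ⟨u, hu, v, hv, huv⟩ := exists_dirDeriv_le_neg_V R hρ.1.le x y
  have hD : dirDeriv R ρ x y x' y' < -δ := by
    linarith [hmin u v hu hv, huv, lt_V_of_not_isApproxNE R hx hy hnot]
  calc V R ((1 - ε) • x + ε • x') ((1 - ε) • y + ε • y')
      ≤ V R x y + ε * dirDeriv R ρ x y x' y' := V_smul_add_smul_le R hR hx' hy' hε.le hερ hρ.2
    _ ≤ V R x y - ε * δ := by linarith [mul_le_mul_of_nonneg_left hD.le hε.le]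

/-- If (x,y) is not a δ-Nash equilibrium and (x',y') minimizes the
ρ-directional derivative, a step of size ε ≤ ρ/2 decreases the duality gap by
at least ε·δ. -/
theorem dualityGap_decrease [NeZero n] (R : Matrix (Fin n) (Fin n) ℝ)
    (hR : ∀ i j, R i j ∈ Set.Icc (0:ℝ) 1)
    (δ : ℝ) (hδ : δ ∈ Set.Ioc (0:ℝ) 1)
    (ρ : ℝ) (hρ : ρ ∈ Set.Ioc (0:ℝ) 1)
    (ε : ℝ) (hε : 0 < ε) (hερ : ε ≤ ρ / 2)
    (x y x' y' : Fin n → ℝ)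
    (hx : x ∈ stdSimplex ℝ (Fin n)) (hy : y ∈ stdSimplex ℝ (Fin n))
    (hx' : x' ∈ stdSimplex ℝ (Fin n)) (hy' : y' ∈ stdSimplex ℝ (Fin n))
    (hnot : ¬ isApproxNE R δ x y)
    (hmin : ∀ u v, u ∈ stdSimplex ℝ (Fin n) → v ∈ stdSimplex ℝ (Fin n) →
      dirDeriv R ρ x y x' y' ≤ dirDeriv R ρ x y u v) :
    V R ((1 - ε) • x + ε • x') ((1 - ε) • y + ε • y') ≤ V R x y - ε * δ :=
  dualityGap_decrease_general R hR δ ρ hρ ε hε hερ x y x' y' hx hy hx' hy' hnot hmin
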